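/- Let X be the principal eigenvector of 𝔾_{1,g} (the k-uniform hypergraph obtained by identifying a vertex of a hypergraph G with vertex v₁ of the g-hypercycle 𝒞_g). If g is odd, then x_{v_{1+i}} = x_{v_{g−i+1}} and x_{v_{a(i,1)}} = x_{v_{a(g−i+1,1)}} and x_{v_i} ≥ x_{v_{i+1}} for i = 1, 2, …, (g−1)/2; if g is even, the same holds for i = 1, 2, …, (g−2)/2. -/

import Mathlib

open Finset

/-- A hypergraph on a finite vertex type `V`: a finite set of edges,
each edge a subset of `V` with at least two vertices. -/
structure FinsetHypergraph (V : Type*) [DecidableEq V] [Fintype V] where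
  edges : Finset (Finset V)
  two_le_card : ∀ e ∈ edges, 2 ≤ e.card

namespace FinsetHypergraph

variable {V : Type*} [DecidableEq V] [Fintype V]

/-- The adjacency matrix `(A_G)_{ij} = ∑_{e ∋ i,j} 1/(|e|-1)` (zero on the diagonal). -/
noncomputable def adjMatrix (G : FinsetHypergraph V) : Matrix V V ℝ :=
  Matrix.of fun i j => if i = j then 0 else
    ∑ e ∈ G.edges.filter (fun e => i ∈ e ∧ j ∈ e), (1 : ℝ) / ((e.card : ℝ) - 1)

/-- The spectral radius: the maximum modulus of an eigenvalue of the
(real symmetric) adjacency matrix. -/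
noncomputable def spectralRadius (G : FinsetHypergraph V) : ℝ :=
  sSup {r : ℝ | ∃ (μ : ℝ) (x : V → ℝ), x ≠ 0 ∧ G.adjMatrix.mulVec x = μ • x ∧ r = |μ|}

/-- `G` is `k`-uniform. -/
def IsUniform (G : FinsetHypergraph V) (k : ℕ) : Prop := ∀ e ∈ G.edges, e.card = k

/-- `G` is connected. -/
def IsConnected (G : FinsetHypergraph V) : Prop :=
  Nonempty V ∧ ∀ u v : V,
    Relation.ReflTransGen (fun a b => ∃ e ∈ G.edges, a ∈ e ∧ b ∈ e) u v

/-- Isomorphism of hypergraphs. -/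
def Iso {W : Type*} [DecidableEq W] [Fintype W] (G : FinsetHypergraph V) (H : FinsetHypergraph W) : Prop :=
  ∃ f : V ≃ W, ∀ s : Finset V, s ∈ G.edges ↔ s.image f ∈ H.edges

/-- The principal eigenvector: positive, unit norm, eigenvector for the spectral radius. -/
def IsPrincipalEigenvector (G : FinsetHypergraph V) (X : V → ℝ) : Prop :=
  (∀ v, 0 < X v) ∧ (∑ v, X v ^ 2 = 1) ∧
    G.adjMatrix.mulVec X = G.spectralRadius • X

/-- `G` contains a hypercycle of length `g`. -/
def HasCycleOfLength (G : FinsetHypergraph V) (g : ℕ) : Prop :=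
  2 ≤ g ∧ ∃ (e : ZMod g → Finset V) (v : ZMod g → V),
    Function.Injective e ∧ Function.Injective v ∧
    (∀ i, e i ∈ G.edges) ∧ (∀ i, v i ∈ e i ∧ v (i + 1) ∈ e i) ∧
    (∀ i j : ZMod g, i ≠ j → j ≠ i + 1 → i ≠ j + 1 → e i ∩ e j = ∅)

/-- The girth of `G` is `g`: the length of a shortest hypercycle. -/
def HasGirth (G : FinsetHypergraph V) (g : ℕ) : Prop :=
  G.HasCycleOfLength g ∧ ∀ g', G.HasCycleOfLength g' → g ≤ g'

/-- A `k`-uniform unicyclic hypergraph: connected with `n - 1 = (k-1)m - 1`,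
i.e. `n = (k-1) m`. -/
def IsUnicyclic (G : FinsetHypergraph V) (k : ℕ) : Prop :=
  G.IsUniform k ∧ G.IsConnected ∧ Fintype.card V = (k - 1) * G.edges.card

/-- A supertree: connected and acyclic. -/
def IsSupertree (G : FinsetHypergraph V) (k : ℕ) : Prop :=
  G.IsUniform k ∧ G.IsConnected ∧ ∀ g, ¬ G.HasCycleOfLength g

/-- `G` is (a copy of) the `k`-uniform hypercycle with `m` edges.
The cycle vertices are `w i t` for `i : ZMod m`, `t : Fin (k-1)`, all distinct;
the `i`-th edge is `{w i 0, w i 1, …, w i (k-2), w (i+1) 0}`, and these are all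
the edges and all the vertices. -/
def IsHypercycle (G : FinsetHypergraph V) (k m : ℕ) (hk : 2 ≤ k) : Prop :=
  ∃ w : ZMod m → Fin (k - 1) → V,
    (Function.Injective fun p : ZMod m × Fin (k - 1) => w p.1 p.2) ∧
    (∀ s : Finset V, s ∈ G.edges ↔
      ∃ i : ZMod m, s = insert (w (i + 1) ⟨0, by omega⟩) (Finset.image (w i) Finset.univ)) ∧
    (∀ x : V, ∃ p : ZMod m × Fin (k - 1), w p.1 p.2 = x)

/-- `H` is obtained from the `k`-uniform `g`-hypercycle `𝒞_g` (with cycle data `w`,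
where `w i 0` plays the role of the cycle vertex `v_{i+1}` and `w i (j+1)` the role
of `v_{a(i+1,j+1)}`, cycle edge `i` being `{w i 0, …, w i (k-2), w (i+1) 0}`)
by identifying the vertex `u` of the hypergraph `G` with the cycle vertex `w gp.1 gp.2`. -/
def IsCycleGlue {V0 : Type*} [DecidableEq V0] [Fintype V0]
    (H : FinsetHypergraph V) (k g : ℕ) (hk : 2 ≤ k) (G : FinsetHypergraph V0) (u : V0)
    (gp : ZMod g × Fin (k - 1)) : Prop :=
  ∃ (ι : V0 ↪ V) (w : ZMod g → Fin (k - 1) → V),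
    (Function.Injective fun p : ZMod g × Fin (k - 1) => w p.1 p.2) ∧
    (∀ p : ZMod g × Fin (k - 1), (∃ y, ι y = w p.1 p.2) ↔ p = gp) ∧
    ι u = w gp.1 gp.2 ∧
    (∀ s : Finset V, s ∈ H.edges ↔
      (∃ t ∈ G.edges, s = t.image ι) ∨
      ∃ i : ZMod g, s = insert (w (i + 1) ⟨0, by omega⟩) (Finset.image (w i) Finset.univ)) ∧
    (∀ x : V, (∃ y, ι y = x) ∨ ∃ p : ZMod g × Fin (k - 1), w p.1 p.2 = x)

/-- `H` is the `k`-uniform lollipop hypergraph: a `g`-hypercycle (cycle data `w`, as in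
`IsCycleGlue`) together with a pendant hyperpath of length `s` (path data `q`,
the `j`-th path edge being `{prev, q j 0, …, q j (k-2)}` where `prev` is the gluing
vertex `w gp.1 gp.2` for `j = 0` and `q (j-1) (k-2)` otherwise). -/
def IsLollipop (H : FinsetHypergraph V) (k g s : ℕ) (hk : 2 ≤ k)
    (gp : ZMod g × Fin (k - 1)) : Prop :=
  ∃ (w : ZMod g → Fin (k - 1) → V) (q : Fin s → Fin (k - 1) → V),
    Function.Injective
      (Sum.elim (fun p : ZMod g × Fin (k - 1) => w p.1 p.2)
        (fun p : Fin s × Fin (k - 1) => q p.1 p.2)) ∧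
    (∀ t : Finset V, t ∈ H.edges ↔
      (∃ i : ZMod g, t = insert (w (i + 1) ⟨0, by omega⟩) (Finset.image (w i) Finset.univ)) ∨
      ∃ j : Fin s, t = insert
        (if j.1 = 0 then w gp.1 gp.2
          else q ⟨j.1 - 1, lt_of_le_of_lt (Nat.sub_le _ _) j.isLt⟩ ⟨k - 2, by omega⟩)
        (Finset.image (q j) Finset.univ)) ∧
    (∀ x : V, (∃ p : ZMod g × Fin (k - 1), w p.1 p.2 = x) ∨
      ∃ p : Fin s × Fin (k - 1), q p.1 p.2 = x)

/-- `H` is `𝒰*(n,k,g)`: a `g`-hypercycle (cycle data `w`) with `t` pendant edges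
attached at the cycle vertex `v₁ = w 0 0`. -/
def IsUStar (H : FinsetHypergraph V) (k g t : ℕ) (hk : 2 ≤ k) : Prop :=
  ∃ (w : ZMod g → Fin (k - 1) → V) (P : Fin t → Fin (k - 1) → V),
    Function.Injective
      (Sum.elim (fun p : ZMod g × Fin (k - 1) => w p.1 p.2)
        (fun p : Fin t × Fin (k - 1) => P p.1 p.2)) ∧
    (∀ s : Finset V, s ∈ H.edges ↔
      (∃ i : ZMod g, s = insert (w (i + 1) ⟨0, by omega⟩) (Finset.image (w i) Finset.univ)) ∨
      ∃ b : Fin t, s = insert (w 0 ⟨0, by omega⟩) (Finset.image (P b) Finset.univ)) ∧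
    (∀ x : V, (∃ p : ZMod g × Fin (k - 1), w p.1 p.2 = x) ∨
      ∃ p : Fin t × Fin (k - 1), P p.1 p.2 = x)

/-- An automorphism of a hypergraph: a permutation of the vertices mapping edges
to edges. -/
def IsAutomorphism (G : FinsetHypergraph V) (σ : Equiv.Perm V) : Prop :=
  ∀ s : Finset V, s ∈ G.edges ↔ s.image σ ∈ G.edges

/-- `H` is the `k`-th power of the ordinary (2-uniform) graph `G`:
each graph edge is enlarged by `k - 2` brand-new vertices, new vertices of
different edges being distinct. -/
def IsKthPower {V0 : Type*} [DecidableEq V0] [Fintype V0]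
    (H : FinsetHypergraph V) (k : ℕ) (G : SimpleGraph V0) : Prop :=
  ∃ (ι : V0 ↪ V) (f : Sym2 V0 → Finset V),
    (∀ s : Finset V, s ∈ H.edges ↔ ∃ e ∈ G.edgeSet, s = f e) ∧
    (∀ e ∈ G.edgeSet, (f e).card = k) ∧
    (∀ e ∈ G.edgeSet, ∀ v : V0, ι v ∈ f e ↔ v ∈ e) ∧
    (∀ e ∈ G.edgeSet, ∀ e' ∈ G.edgeSet, e ≠ e' → ∀ x ∈ f e, x ∈ f e' → ∃ v : V0, ι v = x) ∧
    (∀ x : V, (∃ v, ι v = x) ∨ ∃ e ∈ G.edgeSet, x ∈ f e)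

/-- `G` is the hypergraph `𝒢(𝒟 vD; p, q; vH ℋ)`: disjoint copies of `D` and `Hh`
together with a pendant hyperpath of length `p` attached at (the copy of) `vD`, and a
hyperpath of length `q` joining (the copy of) `vD` to (the copy of) `vH`; all interior
path vertices are new.  Path data `t` (resp. `r`): the `j`-th edge is
`{prev, t j 0, …, t j (k-2)}` with `prev = ιD vD` for `j = 0` and `t (j-1) (k-2)`
otherwise; the last vertex of the connecting path is identified with `ιH vH`. -/
def IsTwoPathJoin {VD VH : Type*} [DecidableEq VD] [Fintype VD]
    [DecidableEq VH] [Fintype VH]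
    (G : FinsetHypergraph V) (k p q : ℕ) (hk : 2 ≤ k)
    (D : FinsetHypergraph VD) (vD : VD) (Hh : FinsetHypergraph VH) (vH : VH) : Prop :=
  ∃ (ιD : VD ↪ V) (ιH : VH ↪ V)
    (t : Fin p → Fin (k - 1) → V) (r : Fin q → Fin (k - 1) → V),
    (∀ x y, ιD x ≠ ιH y) ∧
    Function.Injective
      (Sum.elim (fun a : Fin p × Fin (k - 1) => t a.1 a.2)
        (fun a : Fin q × Fin (k - 1) => r a.1 a.2)) ∧
    (∀ a : Fin p × Fin (k - 1), (∀ x, ιD x ≠ t a.1 a.2) ∧ (∀ x, ιH x ≠ t a.1 a.2)) ∧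
    (∀ a : Fin q × Fin (k - 1), (∀ x, ιD x ≠ r a.1 a.2) ∧
      ((∃ x, ιH x = r a.1 a.2) ↔ (a.1.1 = q - 1 ∧ a.2.1 = k - 2))) ∧
    (∀ hq : 0 < q, r ⟨q - 1, Nat.sub_lt hq Nat.one_pos⟩ ⟨k - 2, by omega⟩ = ιH vH) ∧
    (∀ s : Finset V, s ∈ G.edges ↔
      (∃ e ∈ D.edges, s = e.image ιD) ∨ (∃ e ∈ Hh.edges, s = e.image ιH) ∨
      (∃ j : Fin p, s = insert
        (if j.1 = 0 then ιD vD
          else t ⟨j.1 - 1, lt_of_le_of_lt (Nat.sub_le _ _) j.isLt⟩ ⟨k - 2, by omega⟩)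
        (Finset.image (t j) Finset.univ)) ∨
      (∃ j : Fin q, s = insert
        (if j.1 = 0 then ιD vD
          else r ⟨j.1 - 1, lt_of_le_of_lt (Nat.sub_le _ _) j.isLt⟩ ⟨k - 2, by omega⟩)
        (Finset.image (r j) Finset.univ))) ∧
    (∀ x : V, (∃ y, ιD y = x) ∨ (∃ y, ιH y = x) ∨
      (∃ a : Fin p × Fin (k - 1), t a.1 a.2 = x) ∨
      ∃ a : Fin q × Fin (k - 1), r a.1 a.2 = x)

end FinsetHypergraph

/-- The permutation matrix of `σ`: `(P_σ)_{ij} = 1` iff `σ j = i`. -/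
def permMatrix {V : Type*} [DecidableEq V] [Fintype V] (σ : Equiv.Perm V) :
    Matrix V V ℝ :=
  Matrix.of fun i j => if σ j = i then (1 : ℝ) else 0

/-- The spectral radius of a real square matrix: the maximum modulus of a (real)
eigenvalue. -/
noncomputable def matSpectralRadius {n : ℕ} (A : Matrix (Fin n) (Fin n) ℝ) : ℝ :=
  sSup {r : ℝ | ∃ (μ : ℝ) (x : Fin n → ℝ), x ≠ 0 ∧ A.mulVec x = μ • x ∧ r = |μ|}


open scoped Classical in
/-- Auxiliary expansion of the adjacency action for a `k`-uniform hypergraph. -/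
lemma hyp_mulVec_eq {V : Type*} [DecidableEq V] [Fintype V] (k : ℕ)
    (H : FinsetHypergraph V) (hH : H.IsUniform k) (X : V → ℝ) (v : V) :
    H.adjMatrix.mulVec X v =
      (1/((k:ℝ)-1)) * ∑ e ∈ H.edges.filter (fun e => v ∈ e), ((∑ x ∈ e, X x) - X v) := by
  classical
  have hc : ∀ e ∈ H.edges, (1:ℝ) / ((e.card : ℝ) - 1) = 1/((k:ℝ)-1) := by
    intro e he; rw [hH e he]
  have step1 : ∀ j : V, H.adjMatrix v j * X j =
      ∑ e ∈ H.edges, (if v ∈ e ∧ j ∈ e ∧ v ≠ j then (1/((k:ℝ)-1)) * X j else 0) := by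
    intro j
    by_cases hvj : v = j
    · simp [FinsetHypergraph.adjMatrix, hvj]
    · simp only [FinsetHypergraph.adjMatrix, Matrix.of_apply, if_neg hvj]
      rw [Finset.sum_mul, Finset.sum_filter]
      apply Finset.sum_congr rfl
      intro e he
      by_cases h : v ∈ e ∧ j ∈ e
      · rw [if_pos h, if_pos ⟨h.1, h.2, hvj⟩, hc e he]
      · rw [if_neg h, if_neg (by tauto)]
  have : H.adjMatrix.mulVec X v = ∑ j, H.adjMatrix v j * X j := rfl
  rw [this]
  simp only [step1]
  rw [Finset.sum_comm]
  rw [Finset.mul_sum, Finset.sum_filter]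
  apply Finset.sum_congr rfl
  intro e _
  by_cases hv : v ∈ e
  · rw [if_pos hv]
    have : ∀ j : V, (if v ∈ e ∧ j ∈ e ∧ v ≠ j then (1/((k:ℝ)-1)) * X j else 0)
        = (if j ∈ e.erase v then (1/((k:ℝ)-1)) * X j else 0) := by
      intro j
      congr 1
      simp only [Finset.mem_erase, eq_iff_iff]
      constructor
      · rintro ⟨_, hj, hne⟩; exact ⟨fun h => hne h.symm, hj⟩
      · rintro ⟨hne, hj⟩; exact ⟨hv, hj, fun h => hne h.symm⟩
    simp only [this]
    rw [Finset.sum_ite_mem, Finset.univ_inter, ← Finset.mul_sum,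
      Finset.sum_erase_eq_sub hv]
  · rw [if_neg hv]
    apply Finset.sum_eq_zero
    intro j _
    rw [if_neg (by tauto)]

/-- The reflection of the cycle index set fixing `(0, 0)`. -/
def cycRefl (g m : ℕ) (p : ZMod g × Fin m) : ZMod g × Fin m :=
  (if p.2.1 = 0 then -p.1 else -p.1 - 1, p.2)

lemma cycRefl_invol (g m : ℕ) (p : ZMod g × Fin m) :
    cycRefl g m (cycRefl g m p) = p := by
  unfold cycRefl
  by_cases h : p.2.1 = 0 <;> simp [h] <;> ring

open scoped Classical in
/-- The reflection map on the vertices of `𝔾_{1,g}`, fixing everything outside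
the cycle part. -/
noncomputable def wRefl {V1 : Type*} {g m : ℕ} (w : ZMod g → Fin m → V1) (v : V1) : V1 :=
  if h : ∃ p : ZMod g × Fin m, w p.1 p.2 = v then
    w (cycRefl g m (Classical.choose h)).1 (cycRefl g m (Classical.choose h)).2 else v

lemma wRefl_w {V1 : Type*} {g m : ℕ} (w : ZMod g → Fin m → V1)
    (hinj : Function.Injective fun p : ZMod g × Fin m => w p.1 p.2)
    (p : ZMod g × Fin m) :
    wRefl w (w p.1 p.2) = w (cycRefl g m p).1 (cycRefl g m p).2 := by
  have hex : ∃ q : ZMod g × Fin m, w q.1 q.2 = w p.1 p.2 := ⟨p, rfl⟩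
  rw [wRefl, dif_pos hex]
  have : Classical.choose hex = p := hinj (Classical.choose_spec hex)
  rw [this]

lemma wRefl_not {V1 : Type*} {g m : ℕ} (w : ZMod g → Fin m → V1) (v : V1)
    (h : ¬ ∃ p : ZMod g × Fin m, w p.1 p.2 = v) : wRefl w v = v :=
  dif_neg h

set_option maxHeartbeats 2000000 in
/-- Symmetry and monotonicity of the principal eigenvector of
`𝔾_{1,g}` along the cycle.  Here `w i 0` plays the role of the cycle vertex
`v_{i+1}` and `w i 1` the role of `v_{a(i+1,1)}`; the gluing vertex is
`v₁ = w 0 0`.  So `x_{v_{1+i}} = x_{v_{g-i+1}}` reads `X (w i 0) = X (w (-i) 0)`,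
`x_{v_{a(i,1)}} = x_{v_{a(g-i+1,1)}}` reads `X (w (i-1) 1) = X (w (-i) 1)`, and
`x_{v_i} ≥ x_{v_{i+1}}` reads `X (w i 0) ≤ X (w (i-1) 0)`. -/
theorem principal_eigenvector_symmetry_on_cycle_glue
    {V0 V1 : Type*} [DecidableEq V0] [Fintype V0] [DecidableEq V1] [Fintype V1]
    (k g : ℕ) (hk : 3 ≤ k) (hg : 2 ≤ g)
    (G : FinsetHypergraph V0) (u : V0) (hGu : G.IsUniform k) (hGc : G.IsConnected)
    (H : FinsetHypergraph V1)
    (ι : V0 ↪ V1) (w : ZMod g → Fin (k - 1) → V1)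
    (hinj : Function.Injective fun p : ZMod g × Fin (k - 1) => w p.1 p.2)
    (hrange : ∀ p : ZMod g × Fin (k - 1),
      (∃ y, ι y = w p.1 p.2) ↔ p = (0, ⟨0, by omega⟩))
    (hglue : ι u = w 0 ⟨0, by omega⟩)
    (hedges : ∀ s : Finset V1, s ∈ H.edges ↔
      (∃ t ∈ G.edges, s = t.image ι) ∨
      ∃ i : ZMod g, s = insert (w (i + 1) ⟨0, by omega⟩) (Finset.image (w i) Finset.univ))
    (hcover : ∀ x : V1, (∃ y, ι y = x) ∨ ∃ p : ZMod g × Fin (k - 1), w p.1 p.2 = x)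
    (X : V1 → ℝ) (hX : H.IsPrincipalEigenvector X) :
    (Odd g → ∀ i : ℕ, 1 ≤ i → i ≤ (g - 1) / 2 →
      X (w (i : ZMod g) ⟨0, by omega⟩) = X (w (-(i : ZMod g)) ⟨0, by omega⟩) ∧
      X (w ((i : ZMod g) - 1) ⟨1, by omega⟩) = X (w (-(i : ZMod g)) ⟨1, by omega⟩) ∧
      X (w (i : ZMod g) ⟨0, by omega⟩) ≤ X (w ((i : ZMod g) - 1) ⟨0, by omega⟩)) ∧
    (Even g → ∀ i : ℕ, 1 ≤ i → i ≤ (g - 2) / 2 →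
      X (w (i : ZMod g) ⟨0, by omega⟩) = X (w (-(i : ZMod g)) ⟨0, by omega⟩) ∧
      X (w ((i : ZMod g) - 1) ⟨1, by omega⟩) = X (w (-(i : ZMod g)) ⟨1, by omega⟩) ∧
      X (w (i : ZMod g) ⟨0, by omega⟩) ≤ X (w ((i : ZMod g) - 1) ⟨0, by omega⟩)) := by
  classical
  obtain ⟨Xpos, Xnorm, heig⟩ := hX
  haveI : Fact (1 < g) := ⟨hg⟩
  haveI : NeZero g := ⟨by omega⟩
  set ρ := H.spectralRadius with hρdef
  set z0 : Fin (k-1) := ⟨0, by omega⟩ with hz0def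
  set z1 : Fin (k-1) := ⟨1, by omega⟩ with hz1def
  have hz0val : z0.1 = 0 := rfl
  have hz1val : z1.1 = 1 := rfl
  have hz10 : z1 ≠ z0 := by
    intro h
    have := congrArg Fin.val h
    rw [hz0val, hz1val] at this
    exact one_ne_zero this
  have h1ne0 : (1 : ZMod g) ≠ 0 := one_ne_zero
  set E : ZMod g → Finset V1 :=
    fun i => insert (w (i+1) z0) (Finset.image (w i) Finset.univ) with hEdef
  have hedges' : ∀ s : Finset V1, s ∈ H.edges ↔
      (∃ t ∈ G.edges, s = t.image ι) ∨ ∃ i : ZMod g, s = E i := hedges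
  have hrange' : ∀ p : ZMod g × Fin (k-1), (∃ y, ι y = w p.1 p.2) ↔ p = (0, z0) := hrange
  have hglue' : ι u = w 0 z0 := hglue
  have hwinj : ∀ {p q : ZMod g × Fin (k-1)}, w p.1 p.2 = w q.1 q.2 → p = q :=
    fun h => hinj h
  have hwmem : ∀ (i : ZMod g) (t : Fin (k-1)), w i t ∈ E i := by
    intro i t
    simp only [hEdef]
    exact Finset.mem_insert_of_mem (Finset.mem_image_of_mem _ (Finset.mem_univ t))
  have hwmem1 : ∀ i : ZMod g, w (i+1) z0 ∈ E i := by
    intro i; simp only [hEdef]; exact Finset.mem_insert_self _ _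
  have hwmemE : ∀ (i : ZMod g) (p : ZMod g × Fin (k-1)),
      w p.1 p.2 ∈ E i ↔ p.1 = i ∨ p = (i + 1, z0) := by
    intro i p
    simp only [hEdef, Finset.mem_insert, Finset.mem_image, Finset.mem_univ, true_and]
    constructor
    · rintro (h | ⟨t, ht⟩)
      · exact Or.inr (hwinj (p := p) (q := (i+1, z0)) h)
      · have := hwinj (p := (i, t)) (q := p) ht
        exact Or.inl (by rw [← this])
    · rintro (h | rfl)
      · exact Or.inr ⟨p.2, by rw [h]⟩
      · exact Or.inl rfl
  have hwi_inj : ∀ i : ZMod g, Function.Injective (w i) := by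
    intro i t t' h
    exact congrArg Prod.snd (hwinj (p := (i,t)) (q := (i,t')) h)
  have hnotmem : ∀ i : ZMod g, w (i+1) z0 ∉ Finset.image (w i) Finset.univ := by
    intro i h
    obtain ⟨t, -, ht⟩ := Finset.mem_image.1 h
    have := congrArg Prod.fst (hwinj (p := (i,t)) (q := (i+1, z0)) ht)
    simp only at this
    exact h1ne0 (by rwa [left_eq_add] at this)
  have hEcard : ∀ i, (E i).card = k := by
    intro i
    simp only [hEdef]
    rw [Finset.card_insert_of_notMem (hnotmem i),
      Finset.card_image_of_injective _ (hwi_inj i), Finset.card_univ, Fintype.card_fin]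
    omega
  have hEedge : ∀ i, E i ∈ H.edges := fun i => (hedges' _).2 (Or.inr ⟨i, rfl⟩)
  have hEinj : ∀ i j : ZMod g, E i = E j → i = j := by
    intro i j h
    have h1 : w i z1 ∈ E j := h ▸ hwmem i z1
    rcases (hwmemE j (i, z1)).1 h1 with h2 | h2
    · exact h2
    · exact absurd (congrArg Prod.snd h2) hz10
  have hHuni : H.IsUniform k := by
    intro e he
    rcases (hedges' e).1 he with ⟨t, ht, rfl⟩ | ⟨i, rfl⟩
    · rw [Finset.card_image_of_injective _ ι.injective]; exact hGu t ht
    · exact hEcard i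
  have hwnotG : ∀ p : ZMod g × Fin (k-1), p ≠ (0, z0) →
      ∀ t ∈ G.edges, w p.1 p.2 ∉ t.image ι := by
    intro p hp t _ hmem
    obtain ⟨b, -, hb⟩ := Finset.mem_image.1 hmem
    exact hp ((hrange' p).1 ⟨b, hb⟩)
  have keyeq : ∀ v : V1, ρ * X v =
      (1/((k:ℝ)-1)) * ∑ e ∈ H.edges.filter (fun e => v ∈ e), ((∑ z ∈ e, X z) - X v) := by
    intro v
    rw [← hyp_mulVec_eq k H hHuni X v]
    have := congrFun heig v
    simpa using this.symm
  set T : ZMod g → ℝ := fun i => ∑ z ∈ E i, X z with hTdef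
  set x : ZMod g → ℝ := fun i => X (w i z0) with hxdef
  set y : ZMod g → ℝ := fun i => X (w i z1) with hydef
  have hkR : (3:ℝ) ≤ (k:ℝ) := by exact_mod_cast hk
  have hc'pos : (0:ℝ) < 1/((k:ℝ)-1) := by
    apply div_pos one_pos; linarith
  have hf_int : ∀ (j : ZMod g) (t : Fin (k-1)), t ≠ z0 →
      H.edges.filter (fun e => w j t ∈ e) = {E j} := by
    intro j t ht
    ext e
    simp only [Finset.mem_filter, Finset.mem_singleton]
    constructor
    · rintro ⟨he, hmem⟩
      rcases (hedges' e).1 he with ⟨s, hs, rfl⟩ | ⟨i, rfl⟩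
      · exact absurd hmem (hwnotG (j, t) (fun h => ht (congrArg Prod.snd h)) s hs)
      · rcases (hwmemE i (j, t)).1 hmem with h | h
        · have h' : j = i := h
          rw [h']
        · exact absurd (congrArg Prod.snd h) ht
    · rintro rfl; exact ⟨hEedge j, hwmem j t⟩
  have hsubne : ∀ j : ZMod g, j - 1 ≠ j := by
    intro j h
    exact h1ne0 (sub_eq_self.1 h)
  have hf_v : ∀ j : ZMod g, j ≠ 0 →
      H.edges.filter (fun e => w j z0 ∈ e) = {E (j-1), E j} := by
    intro j hj
    ext e
    simp only [Finset.mem_filter, Finset.mem_insert, Finset.mem_singleton]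
    constructor
    · rintro ⟨he, hmem⟩
      rcases (hedges' e).1 he with ⟨s, hs, rfl⟩ | ⟨i, rfl⟩
      · refine absurd hmem (hwnotG (j, z0) ?_ s hs)
        intro h
        exact hj (congrArg Prod.fst h)
      · rcases (hwmemE i (j, z0)).1 hmem with h | h
        · right
          have h' : j = i := h
          rw [h']
        · left
          have h1 : j = i + 1 := congrArg Prod.fst h
          have h2 : j - 1 = i := by rw [h1]; ring
          rw [h2]
    · rintro (rfl | rfl)
      · refine ⟨hEedge _, ?_⟩
        have h3 : w j z0 = w ((j-1)+1) z0 := by rw [sub_add_cancel]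
        rw [h3]; exact hwmem1 (j-1)
      · exact ⟨hEedge j, hwmem j z0⟩
  have hfilter_nonneg : ∀ v : V1, ∀ e ∈ H.edges.filter (fun e => v ∈ e),
      0 ≤ (∑ z ∈ e, X z) - X v := by
    intro v e he
    obtain ⟨-, hv⟩ := Finset.mem_filter.1 he
    rw [← Finset.sum_erase_eq_sub hv]
    exact Finset.sum_nonneg fun z _ => (Xpos z).le
  have eq_int : ∀ (j : ZMod g) (t : Fin (k-1)), t ≠ z0 →
      ρ * X (w j t) = (1/((k:ℝ)-1)) * (T j - X (w j t)) := by
    intro j t ht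
    simp only [hTdef]
    rw [keyeq (w j t), hf_int j t ht, Finset.sum_singleton]
  have eq_v : ∀ j : ZMod g, j ≠ 0 →
      ρ * x j = (1/((k:ℝ)-1)) * ((T (j-1) - x j) + (T j - x j)) := by
    intro j hj
    have hne : E (j-1) ≠ E j := fun h => hsubne j (hEinj _ _ h)
    simp only [hxdef, hTdef]
    rw [keyeq, hf_v j hj, Finset.sum_pair hne]
  have ineq_0 : (1/((k:ℝ)-1)) * ((T (0-1) - x 0) + (T 0 - x 0)) ≤ ρ * x 0 := by
    have hsub : ({E (0-1), E 0} : Finset (Finset V1)) ⊆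
        H.edges.filter (fun e => w 0 z0 ∈ e) := by
      intro e he
      rcases Finset.mem_insert.1 he with rfl | he
      · rw [Finset.mem_filter]
        refine ⟨hEedge _, ?_⟩
        have h3 : w (0:ZMod g) z0 = w ((0-1)+1) z0 := by rw [sub_add_cancel]
        rw [h3]; exact hwmem1 _
      · rw [Finset.mem_singleton.1 he, Finset.mem_filter]
        exact ⟨hEedge 0, hwmem 0 z0⟩
    have hne : E (0-1) ≠ E 0 := fun h => hsubne 0 (hEinj _ _ h)
    simp only [hxdef, hTdef]
    rw [keyeq]
    apply mul_le_mul_of_nonneg_left _ hc'pos.le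
    rw [← Finset.sum_pair (f := fun e => (∑ z ∈ e, X z) - X (w 0 z0)) hne]
    exact Finset.sum_le_sum_of_subset_of_nonneg hsub
      (fun e he _ => hfilter_nonneg _ e he)
  have hρpos : 0 < ρ := by
    have hmm : w 0 z0 ∈ (E 0).erase (w 0 z1) := by
      refine Finset.mem_erase.2 ⟨?_, hwmem 0 z0⟩
      intro h
      exact hz10 (congrArg Prod.snd (hwinj (p := ((0:ZMod g), z0)) (q := ((0:ZMod g), z1)) h)).symm
    have h1 : X (w 0 z0) ≤ ∑ z ∈ (E 0).erase (w 0 z1), X z :=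
      Finset.single_le_sum (fun i _ => (Xpos i).le) hmm
    have h2 : ∑ z ∈ (E 0).erase (w 0 z1), X z = T 0 - X (w 0 z1) := by
      simp only [hTdef]; exact Finset.sum_erase_eq_sub (hwmem 0 z1)
    have h3 := eq_int 0 z1 hz10
    nlinarith [Xpos (w 0 z0), Xpos (w 0 z1), hc'pos]
  have hyint : ∀ (j : ZMod g) (t : Fin (k-1)), t ≠ z0 → X (w j t) = y j := by
    intro j t ht
    have h1 := eq_int j t ht
    have h2 := eq_int j z1 hz10
    have key : ∀ a : ℝ, ρ * a = (1/((k:ℝ)-1)) * (T j - a) →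
        (ρ + 1/((k:ℝ)-1)) * a = (1/((k:ℝ)-1)) * T j := by
      intro a h; linear_combination h
    have hA := key _ h1
    have hB := key _ h2
    have hne : (ρ + 1/((k:ℝ)-1)) ≠ 0 := ne_of_gt (by linarith)
    simp only [hydef]
    exact mul_left_cancel₀ hne (hA.trans hB.symm)
  have hwisum : ∀ j : ZMod g, ∑ t : Fin (k-1), X (w j t) = x j + ((k:ℝ)-2) * y j := by
    intro j
    rw [← Finset.add_sum_erase _ _ (Finset.mem_univ z0)]
    have hcongr : ∀ t ∈ Finset.univ.erase z0, X (w j t) = y j :=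
      fun t ht => hyint j t (Finset.mem_erase.1 ht).1
    rw [Finset.sum_congr rfl hcongr, Finset.sum_const, nsmul_eq_mul,
      Finset.card_erase_of_mem (Finset.mem_univ z0), Finset.card_univ, Fintype.card_fin]
    have hcast : ((k - 1 - 1 : ℕ) : ℝ) = (k:ℝ) - 2 := by
      have h1 : (k - 1 - 1 : ℕ) = k - 2 := by omega
      rw [h1, Nat.cast_sub (by omega)]
      norm_num
    rw [hcast]
  have hTeq : ∀ j : ZMod g, T j = x (j+1) + (x j + ((k:ℝ)-2) * y j) := by
    intro j
    rw [← hwisum j]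
    simp only [hTdef, hEdef, hxdef]
    rw [Finset.sum_insert (hnotmem j), Finset.sum_image (fun a _ b _ h => hwi_inj j h)]
  set D : ℝ := ((k:ℝ)-1) * ρ - ((k:ℝ) - 3) with hDdef
  have hDy : ∀ j : ZMod g, D * y j = x j + x (j+1) := by
    intro j
    have h2 := eq_int j z1 hz10
    have hkne : ((k:ℝ)-1) ≠ 0 := by linarith
    have h4 : ((k:ℝ)-1) * (ρ * X (w j z1)) = T j - X (w j z1) := by
      rw [h2]; field_simp
    have h5 : X (w j z1) = y j := rfl
    rw [h5] at h4
    simp only [hDdef]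
    linear_combination h4 + hTeq j
  have hDpos : 0 < D := by
    by_contra h
    push_neg at h
    have hy0 : (0:ℝ) < y 0 := Xpos _
    have h1 : D * y 0 ≤ 0 := mul_nonpos_of_nonpos_of_nonneg h hy0.le
    have h2 := hDy 0
    have hx0 : (0:ℝ) < x 0 := Xpos _
    have hx1 : (0:ℝ) < x (0+1) := Xpos _
    nlinarith
  set α : ℝ := D * ((k:ℝ)-1) * ρ - 2*((k:ℝ)-2) with hαdef
  set β : ℝ := D + (k:ℝ) - 2 with hβdef
  have hβpos : 0 < β := by simp only [hβdef]; linarith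
  have hrec : ∀ j : ZMod g, j ≠ 0 → α * x j = β * (x (j-1) + x (j+1)) := by
    intro j hj
    have h2 := eq_v j hj
    have hkne : ((k:ℝ)-1) ≠ 0 := by linarith
    have h4 : ((k:ℝ)-1) * (ρ * x j) = (T (j-1) - x j) + (T j - x j) := by
      rw [h2]; field_simp
    have hB : T (j-1) = x j + (x (j-1) + ((k:ℝ)-2) * y (j-1)) := by
      rw [hTeq (j-1), sub_add_cancel]
    have hC := hTeq j
    have hD1 : D * y (j-1) = x (j-1) + x j := by
      rw [hDy (j-1), sub_add_cancel]
    have hD2 := hDy j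
    simp only [hαdef, hβdef]
    linear_combination D * h4 + D * hB + D * hC + ((k:ℝ)-2) * hD1 + ((k:ℝ)-2) * hD2
  have hαpos : 0 < α := by
    by_contra h
    push_neg at h
    have h2 := hrec 1 h1ne0
    have hx1 : (0:ℝ) < x 1 := Xpos _
    have ha : (0:ℝ) < x (1-1) := Xpos _
    have hb : (0:ℝ) < x (1+1) := Xpos _
    nlinarith [mul_pos hβpos (show (0:ℝ) < x (1-1) + x (1+1) by linarith),
      mul_nonpos_of_nonpos_of_nonneg h hx1.le]
  have hineq : β * (x (0-1) + x (0+1)) ≤ α * x 0 := by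
    have hkne : (0:ℝ) < (k:ℝ) - 1 := by linarith
    have h4 : (T (0-1) - x 0) + (T 0 - x 0) ≤ ((k:ℝ)-1) * (ρ * x 0) := by
      have h5 : ((k:ℝ)-1) * ((1/((k:ℝ)-1)) * ((T (0-1) - x 0) + (T 0 - x 0)))
          = (T (0-1) - x 0) + (T 0 - x 0) := by field_simp
      calc (T (0-1) - x 0) + (T 0 - x 0)
          = ((k:ℝ)-1) * ((1/((k:ℝ)-1)) * ((T (0-1) - x 0) + (T 0 - x 0))) := h5.symm
        _ ≤ ((k:ℝ)-1) * (ρ * x 0) := mul_le_mul_of_nonneg_left ineq_0 hkne.le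
    have hB : T (0-1) = x 0 + (x (0-1) + ((k:ℝ)-2) * y (0-1)) := by
      rw [hTeq (0-1), sub_add_cancel]
    have hC := hTeq 0
    have hD1 : D * y (0-1) = x (0-1) + x 0 := by
      rw [hDy (0-1), sub_add_cancel]
    have hD2 := hDy 0
    have lin : α * x 0 - β * (x (0-1) + x (0+1)) =
        D * (((k:ℝ)-1) * (ρ * x 0) - ((T (0-1) - x 0) + (T 0 - x 0))) := by
      simp only [hαdef, hβdef]
      linear_combination D * hB + D * hC + ((k:ℝ)-2) * hD1 + ((k:ℝ)-2) * hD2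
    nlinarith [mul_nonneg hDpos.le (sub_nonneg.2 h4)]
  -- the reflection symmetry
  have hfw' : ∀ (i : ZMod g) (t : Fin (k-1)), wRefl w (w i t) =
      w (cycRefl g (k-1) (i, t)).1 (cycRefl g (k-1) (i, t)).2 :=
    fun i t => wRefl_w w hinj (i, t)
  have hcyc0 : ∀ i : ZMod g, cycRefl g (k-1) (i, z0) = (-i, z0) := by
    intro i; simp [cycRefl, hz0val]
  have hcyct : ∀ (i : ZMod g) (t : Fin (k-1)), t ≠ z0 →
      cycRefl g (k-1) (i, t) = (-i-1, t) := by
    intro i t ht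
    have h' : ¬ t.1 = 0 := by
      intro h
      exact ht (Fin.ext (by rw [h, hz0val]))
    simp [cycRefl, h']
  have hfw0 : ∀ i : ZMod g, wRefl w (w i z0) = w (-i) z0 := by
    intro i
    rw [hfw' i z0, hcyc0 i]
  have hfwt : ∀ (i : ZMod g) (t : Fin (k-1)), t ≠ z0 → wRefl w (w i t) = w (-i-1) t := by
    intro i t ht
    rw [hfw' i t, hcyct i t ht]
  have hfι : ∀ a : V0, wRefl w (ι a) = ι a := by
    intro a
    by_cases h : ∃ p : ZMod g × Fin (k-1), w p.1 p.2 = ι a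
    · obtain ⟨p, hp⟩ := h
      have hp0 : p = (0, z0) := (hrange' p).1 ⟨a, hp.symm⟩
      subst hp0
      rw [← hp, hfw0, neg_zero]
    · exact wRefl_not w (ι a) h
  have hinvol : ∀ v, wRefl w (wRefl w v) = v := by
    intro v
    rcases hcover v with ⟨a, rfl⟩ | ⟨p, rfl⟩
    · rw [hfι, hfι]
    · rw [wRefl_w w hinj p, wRefl_w w hinj _, cycRefl_invol]
  have hfinj : Function.Injective (wRefl w) := Function.Involutive.injective hinvol
  have hfbij : Function.Bijective (wRefl w) := Function.Involutive.bijective hinvol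
  have hfE : ∀ i : ZMod g, (E i).image (wRefl w) = E (-i - 1) := by
    intro i
    apply Finset.eq_of_subset_of_card_le
    · intro v hv
      obtain ⟨z, hz, rfl⟩ := Finset.mem_image.1 hv
      rcases Finset.mem_insert.1 (by simpa only [hEdef] using hz) with rfl | hz'
      · rw [hfw0]
        have h1 : -(i+1) = (-i-1) := by ring
        rw [h1]
        exact hwmem _ z0
      · obtain ⟨t, -, rfl⟩ := Finset.mem_image.1 hz'
        by_cases ht : t = z0
        · subst ht
          rw [hfw0]
          have h2 := hwmem1 (-i-1)
          rwa [show (-i-1)+1 = -i by ring] at h2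
        · rw [hfwt i t ht]
          exact hwmem _ t
    · rw [Finset.card_image_of_injective _ hfinj, hEcard, hEcard]
  have hfedge : ∀ s ∈ H.edges, s.image (wRefl w) ∈ H.edges := by
    intro s hs
    rcases (hedges' s).1 hs with ⟨t, ht, rfl⟩ | ⟨i, rfl⟩
    · rw [Finset.image_image]
      have himg : t.image (wRefl w ∘ ι) = t.image ι :=
        Finset.image_congr (fun a _ => hfι a)
      rw [himg]
      exact (hedges' _).2 (Or.inl ⟨t, ht, rfl⟩)
    · rw [hfE]
      exact hEedge _
  have himg_invol : ∀ s : Finset V1, (s.image (wRefl w)).image (wRefl w) = s := by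
    intro s
    rw [Finset.image_image]
    have : s.image (wRefl w ∘ wRefl w) = s.image id := Finset.image_congr (fun a _ => hinvol a)
    rw [this, Finset.image_id]
  have hAeq : ∀ a b : V1, H.adjMatrix (wRefl w a) (wRefl w b) = H.adjMatrix a b := by
    intro a b
    by_cases hab : a = b
    · subst hab; simp [FinsetHypergraph.adjMatrix]
    · have h2 : ¬ (wRefl w a = wRefl w b) := fun h => hab (hfinj h)
      simp only [FinsetHypergraph.adjMatrix, Matrix.of_apply, if_neg hab, if_neg h2]
      refine Finset.sum_nbij' (i := fun e => e.image (wRefl w)) (j := fun e => e.image (wRefl w))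
        ?_ ?_ ?_ ?_ ?_
      · intro e he
        obtain ⟨he1, ha, hb⟩ := Finset.mem_filter.1 he
        refine Finset.mem_filter.2 ⟨hfedge e he1, ?_, ?_⟩
        · have h3 := Finset.mem_image_of_mem (wRefl w) ha
          rwa [hinvol] at h3
        · have h3 := Finset.mem_image_of_mem (wRefl w) hb
          rwa [hinvol] at h3
      · intro e he
        obtain ⟨he1, ha, hb⟩ := Finset.mem_filter.1 he
        refine Finset.mem_filter.2 ⟨hfedge e he1, ?_, ?_⟩
        · exact Finset.mem_image_of_mem _ ha
        · exact Finset.mem_image_of_mem _ hb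
      · intro e _; exact himg_invol e
      · intro e _; exact himg_invol e
      · intro e _
        rw [Finset.card_image_of_injective _ hfinj]
  have heig' : ∀ v : V1, ∑ j, H.adjMatrix v j * X (wRefl w j) = ρ * X (wRefl w v) := by
    intro v
    have h1 : ∑ j, H.adjMatrix v j * X (wRefl w j)
        = ∑ j, H.adjMatrix v (wRefl w j) * X j := by
      refine (Fintype.sum_bijective (wRefl w) hfbij _ _ ?_).symm
      intro j
      rw [hinvol j]
    have h2 : ∀ j, H.adjMatrix v (wRefl w j) = H.adjMatrix (wRefl w v) j := by
      intro j
      conv_lhs => rw [← hinvol v]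
      exact hAeq _ _
    rw [h1]
    simp only [h2]
    have h3 : ∑ j, H.adjMatrix (wRefl w v) j * X j = ρ * X (wRefl w v) :=
      congrFun heig (wRefl w v)
    exact h3
  obtain ⟨v0, -, hv0⟩ := Finset.exists_min_image (Finset.univ : Finset V1)
    (fun v => X v / X (wRefl w v)) ⟨w 0 z0, Finset.mem_univ _⟩
  set c : ℝ := X v0 / X (wRefl w v0) with hcdef
  have hcpos : 0 < c := div_pos (Xpos _) (Xpos _)
  set Z : V1 → ℝ := fun v => X v - c * X (wRefl w v) with hZdef
  have hZnonneg : ∀ v, 0 ≤ Z v := by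
    intro v
    have h1 : c ≤ X v / X (wRefl w v) := hv0 v (Finset.mem_univ v)
    have h2 : 0 < X (wRefl w v) := Xpos _
    have h3 : c * X (wRefl w v) ≤ (X v / X (wRefl w v)) * X (wRefl w v) :=
      mul_le_mul_of_nonneg_right h1 h2.le
    rw [div_mul_cancel₀ _ h2.ne'] at h3
    simp only [hZdef]
    linarith
  have hZv0 : Z v0 = 0 := by
    simp only [hZdef, hcdef]
    rw [div_mul_cancel₀ _ (Xpos (wRefl w v0)).ne']
    ring
  have hZeig : ∀ v, ∑ j, H.adjMatrix v j * Z j = ρ * Z v := by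
    intro v
    have e1 : ∑ j, H.adjMatrix v j * X j = ρ * X v := congrFun heig v
    have e2 := heig' v
    simp only [hZdef]
    calc ∑ j, H.adjMatrix v j * (X j - c * X (wRefl w j))
        = (∑ j, H.adjMatrix v j * X j) - c * ∑ j, H.adjMatrix v j * X (wRefl w j) := by
          rw [Finset.mul_sum, ← Finset.sum_sub_distrib]
          exact Finset.sum_congr rfl (fun j _ => by ring)
      _ = ρ * X v - c * (ρ * X (wRefl w v)) := by rw [e1, e2]
      _ = ρ * (X v - c * X (wRefl w v)) := by ring
  have hAnonneg : ∀ a b : V1, 0 ≤ H.adjMatrix a b := by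
    intro a b
    simp only [FinsetHypergraph.adjMatrix, Matrix.of_apply]
    split
    · exact le_refl _
    · refine Finset.sum_nonneg fun e he => ?_
      have he1 := (Finset.mem_filter.1 he).1
      have h2 : e.card = k := hHuni e he1
      rw [h2]
      exact hc'pos.le
  have hApos : ∀ a b : V1, a ≠ b → (∃ e ∈ H.edges, a ∈ e ∧ b ∈ e) →
      0 < H.adjMatrix a b := by
    rintro a b hab ⟨e0, he0, ha, hb⟩
    simp only [FinsetHypergraph.adjMatrix, Matrix.of_apply, if_neg hab]
    refine Finset.sum_pos ?_ ⟨e0, Finset.mem_filter.2 ⟨he0, ha, hb⟩⟩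
    intro e he
    have h2 : e.card = k := hHuni e (Finset.mem_filter.1 he).1
    rw [h2]
    exact hc'pos
  have hprop : ∀ a b : V1, (∃ e ∈ H.edges, a ∈ e ∧ b ∈ e) → 0 < Z a → 0 < Z b := by
    intro a b hadj hZa
    by_cases hab : a = b
    · rwa [← hab]
    have h1 : 0 < H.adjMatrix b a := by
      refine hApos b a (Ne.symm hab) ?_
      obtain ⟨e, he, ha, hb⟩ := hadj
      exact ⟨e, he, hb, ha⟩
    have h2 : H.adjMatrix b a * Z a ≤ ∑ j, H.adjMatrix b j * Z j :=
      Finset.single_le_sum (f := fun j => H.adjMatrix b j * Z j)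
        (fun j _ => mul_nonneg (hAnonneg b j) (hZnonneg j)) (Finset.mem_univ a)
    have h3 := hZeig b
    nlinarith [mul_pos h1 hZa, hρpos, hZnonneg b]
  have hconnbase : ∀ v : V1,
      Relation.ReflTransGen (fun a b => ∃ e ∈ H.edges, a ∈ e ∧ b ∈ e) v (w 0 z0) := by
    have hcyc : ∀ n : ℕ,
        Relation.ReflTransGen (fun a b => ∃ e ∈ H.edges, a ∈ e ∧ b ∈ e)
          (w (n : ZMod g) z0) (w 0 z0) := by
      intro n
      induction n with
      | zero =>
        rw [Nat.cast_zero]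
      | succ n ih =>
        refine Relation.ReflTransGen.head ⟨E (n : ZMod g), hEedge _, ?_, hwmem _ z0⟩ ih
        have : ((n+1 : ℕ) : ZMod g) = (n : ZMod g) + 1 := by push_cast; ring
        rw [this]
        exact hwmem1 _
    intro v
    rcases hcover v with ⟨a, rfl⟩ | ⟨p, rfl⟩
    · have hpath := hGc.2 a u
      have hlift := Relation.ReflTransGen.lift
        (r := fun a b : V0 => ∃ e ∈ G.edges, a ∈ e ∧ b ∈ e)
        (p := fun a b : V1 => ∃ e ∈ H.edges, a ∈ e ∧ b ∈ e) (fun b : V0 => (ι b : V1))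
        (fun a b hab => by
          obtain ⟨e, he, ha, hb⟩ := hab
          exact ⟨e.image ι, (hedges' _).2 (Or.inl ⟨e, he, rfl⟩),
            Finset.mem_image_of_mem _ ha, Finset.mem_image_of_mem _ hb⟩) _ _ hpath
      simp only [Function.onFun] at hlift
      rwa [hglue'] at hlift
    · refine Relation.ReflTransGen.head ⟨E p.1, hEedge _, hwmem _ _, hwmem p.1 z0⟩ ?_
      obtain ⟨n, hn⟩ := ZMod.natCast_zmod_surjective (n := g) p.1
      rw [← hn]
      exact hcyc n
  have hRTG : ∀ a b : V1,
      Relation.ReflTransGen (fun a b => ∃ e ∈ H.edges, a ∈ e ∧ b ∈ e) a b := by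
    intro a b
    have hsymm : Symmetric (fun a b : V1 => ∃ e ∈ H.edges, a ∈ e ∧ b ∈ e) := by
      rintro p q ⟨e, he, hp, hq⟩
      exact ⟨e, he, hq, hp⟩
    exact (hconnbase a).trans ((@Relation.ReflTransGen.stdSymm _ _ ⟨fun a b h => hsymm h⟩).symm _ _ (hconnbase b))
  have hZzero : ∀ v, Z v = 0 := by
    intro v
    rcases eq_or_lt_of_le (hZnonneg v) with h | h
    · exact h.symm
    exfalso
    have hkey : 0 < Z v0 := by
      have hpath := hRTG v v0
      have hmain : ∀ a (h : Relation.ReflTransGen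
          (fun a b => ∃ e ∈ H.edges, a ∈ e ∧ b ∈ e) a v0), 0 < Z a → 0 < Z v0 := by
        intro a hpath'
        induction hpath' using Relation.ReflTransGen.head_induction_on with
        | refl => exact id
        | head hstep _ ih => exact fun ha => ih (hprop _ _ hstep ha)
      exact hmain v hpath h
    rw [hZv0] at hkey
    exact lt_irrefl 0 hkey
  have hXf : ∀ v, X v = c * X (wRefl w v) := by
    intro v
    have h1 := hZzero v
    simp only [hZdef] at h1
    linarith
  have hc1 : c = 1 := by
    have h1 := hXf (w 0 z0)
    rw [hfw0 0, neg_zero] at h1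
    have h2 : (c - 1) * X (w 0 z0) = 0 := by linarith
    rcases mul_eq_zero.1 h2 with h3 | h3
    · linarith
    · exact absurd h3 (Xpos _).ne'
  have hXsym : ∀ v, X v = X (wRefl w v) := by
    intro v
    rw [hXf v, hc1, one_mul]
  have hsx : ∀ i : ZMod g, x i = x (-i) := by
    intro i
    simp only [hxdef]
    conv_lhs => rw [hXsym (w i z0), hfw0 i]
  have hsy : ∀ i : ZMod g, y i = y (-i - 1) := by
    intro i
    simp only [hydef]
    conv_lhs => rw [hXsym (w i z1), hfwt i z1 hz10]
  -- natural-number indexed quantities along the half cycle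
  have hne0 : ∀ n : ℕ, 1 ≤ n → n ≤ g - 1 → ((n : ZMod g)) ≠ 0 := by
    intro n h1 h2 h
    have hdvd := (ZMod.natCast_eq_zero_iff n g).1 h
    have := Nat.le_of_dvd (by omega) hdvd
    omega
  set dn : ℕ → ℝ := fun n => x ((n : ZMod g) - 1) - x ((n : ZMod g)) with hdndef
  have hstep : ∀ n : ℕ, 1 ≤ n → n ≤ g - 1 →
      β * dn (n+1) = β * dn n + (2*β - α) * x ((n : ZMod g)) := by
    intro n h1 h2
    have hj := hrec (n : ZMod g) (hne0 n h1 h2)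
    simp only [hdndef]
    have hc1 : ((n + 1 : ℕ) : ZMod g) = (n : ZMod g) + 1 := by push_cast; ring
    rw [hc1, add_sub_cancel_right]
    linear_combination hj
  have hmid_odd : ∀ m : ℕ, g = 2*m+1 → dn (m+1) = 0 := by
    intro m hm
    have e1 : ((m + 1 : ℕ) : ZMod g) = -((m : ℕ) : ZMod g) := by
      refine eq_neg_of_add_eq_zero_left ?_
      rw [← Nat.cast_add, show m+1+m = g by omega, ZMod.natCast_self]
    simp only [hdndef]
    rw [show ((m+1:ℕ):ZMod g) - 1 = ((m:ℕ):ZMod g) by push_cast; ring]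
    rw [e1, ← hsx]
    ring
  have hmid_even : ∀ m : ℕ, g = m + m → 1 ≤ m → dn m + dn (m+1) = 0 := by
    intro m hm hm1
    have e1 : ((m + 1 : ℕ) : ZMod g) = -(((m - 1 : ℕ) : ZMod g)) := by
      refine eq_neg_of_add_eq_zero_left ?_
      rw [← Nat.cast_add, show m+1+(m-1) = g by omega, ZMod.natCast_self]
    have e2 : x (((m+1 : ℕ)) : ZMod g) = x (((m - 1:ℕ)) : ZMod g) := by
      rw [e1, ← hsx]
    have e3 : ((m:ℕ) : ZMod g) - 1 = ((m-1 : ℕ) : ZMod g) := by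
      obtain ⟨n, rfl⟩ : ∃ n, m = n + 1 := ⟨m-1, by omega⟩
      rw [show n+1-1 = n from rfl]
      push_cast
      ring
    have e4 : ((m+1:ℕ):ZMod g) - 1 = ((m:ℕ):ZMod g) := by push_cast; ring
    simp only [hdndef]
    rw [e3, e4, e2]
    ring
  have hkey : ∀ i : ℕ, 1 ≤ i → 2 * i ≤ g → 0 ≤ dn i := by
    intro i hi1 hi2
    by_cases hγ : 2*β - α ≤ 0
    · have hdec : ∀ n, 1 ≤ n → n ≤ g - 1 → dn (n+1) ≤ dn n := by
        intro n hn1 hn2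
        have hs := hstep n hn1 hn2
        have hxpos : 0 < x ((n : ZMod g)) := Xpos _
        nlinarith
      have hchain : ∀ a t : ℕ, 1 ≤ a → a + t ≤ g → dn (a + t) ≤ dn a := by
        intro a t ha
        induction t with
        | zero => intro _; simp
        | succ t ih =>
          intro h
          have h1 : dn (a + t + 1) ≤ dn (a + t) := hdec (a+t) (by omega) (by omega)
          have h2 := ih (by omega)
          calc dn (a + (t+1)) = dn (a + t + 1) := by rw [show a + (t+1) = a + t + 1 by omega]
            _ ≤ dn (a + t) := h1
            _ ≤ dn a := h2
      rcases Nat.even_or_odd g with ⟨m, hm⟩ | ⟨m, hm⟩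
      · have hm1 : 1 ≤ m := by omega
        have hmid := hmid_even m hm hm1
        have hdm : 0 ≤ dn m := by
          have := hdec m hm1 (by omega)
          linarith
        have := hchain i (m - i) hi1 (by omega)
        rw [show i + (m - i) = m by omega] at this
        linarith
      · have hmid := hmid_odd m hm
        have := hchain i (m + 1 - i) hi1 (by omega)
        rw [show i + (m + 1 - i) = m + 1 by omega] at this
        linarith
    · exfalso
      push_neg at hγ
      have hd1 : 0 < dn 1 := by
        have h1 := hineq
        have h2 : x ((0:ZMod g)-1) = x 1 := by
          rw [zero_sub]
          exact (hsx 1).symm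
        rw [h2, zero_add] at h1
        have hx1 : (0:ℝ) < x 1 := Xpos _
        simp only [hdndef]
        rw [Nat.cast_one, sub_self]
        nlinarith [mul_pos hγ hx1]
      have hinc : ∀ n, 1 ≤ n → n ≤ g - 1 → dn n < dn (n+1) := by
        intro n hn1 hn2
        have hs := hstep n hn1 hn2
        have hxpos : 0 < x ((n : ZMod g)) := Xpos _
        nlinarith [mul_pos hγ hxpos]
      have hpos : ∀ t : ℕ, 1 + t ≤ g → 0 < dn (1 + t) := by
        intro t
        induction t with
        | zero => intro _; simpa using hd1
        | succ t ih =>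
          intro h
          have h1 := hinc (1+t) (by omega) (by omega)
          have h2 := ih (by omega)
          have h3 : 1 + (t+1) = (1+t) + 1 := by omega
          rw [h3]
          linarith
      rcases Nat.even_or_odd g with ⟨m, hm⟩ | ⟨m, hm⟩
      · have hm1 : 1 ≤ m := by omega
        have hmid := hmid_even m hm hm1
        have p1 := hpos (m - 1) (by omega)
        have p2 := hpos m (by omega)
        rw [show 1 + (m-1) = m by omega] at p1
        rw [show 1 + m = m + 1 by omega] at p2
        linarith
      · have hmid := hmid_odd m hm
        have p2 := hpos m (by omega)
        rw [show 1 + m = m + 1 by omega] at p2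
        linarith
  constructor
  · intro hodd i hi1 hi2
    obtain ⟨m, hm⟩ := hodd
    refine ⟨hsx _, ?_, ?_⟩
    · have h1 := hsy ((i : ZMod g) - 1)
      have h2 : -((i : ZMod g) - 1) - 1 = -(i : ZMod g) := by ring
      rw [h2] at h1
      exact h1
    · have h0 := hkey i hi1 (by omega)
      show X (w (i:ZMod g) z0) ≤ X (w ((i:ZMod g) - 1) z0)
      simp only [hdndef, hxdef] at h0
      linarith
  · intro heven i hi1 hi2
    obtain ⟨m, hm⟩ := heven
    refine ⟨hsx _, ?_, ?_⟩
    · have h1 := hsy ((i : ZMod g) - 1)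
      have h2 : -((i : ZMod g) - 1) - 1 = -(i : ZMod g) := by ring
      rw [h2] at h1
      exact h1
    · have h0 := hkey i hi1 (by omega)
      show X (w (i:ZMod g) z0) ≤ X (w ((i:ZMod g) - 1) z0)
      simp only [hdndef, hxdef] at h0
      linarith
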